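/- Let F : ℝ^d → ℝ be continuous, bounded above with unique maximizer h*, satisfying the inverse continuity condition: there exist c_p, p, R_p > 0 and F_∞ > 0 with c_p|h − h*|^p ≤ F(h*) − F(h) for |h| ≤ R_p, and F(h*) − F(h) ≥ F_∞ for |h| > R_p. Let ρ ∈ P₁(ℝ^d) with h* ∈ supp(ρ). Then for any r ∈ (0, R_p] and q > 0 with q + F_r < F_∞, where F_r := F(h*) − inf_{B(h*,r)} F, the mean of the exponentially reweighted measure satisfies |m(G_{αF}[ρ]) − h*| ≤ ((q + F_r)/c_p)^{1/p} + (e^{−αq}/ρ(B(h*,r))) ∫|h − h*| dρ(h). -/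

import Mathlib

/-!
The reweighted measure is the exponentially tilted measure `ρ.tilted (α F)`, a probability
measure with density `e^{αF} / Z` against `ρ`, so `|m - h*| ≤ ∫ |h - h*|` under it. Split this
integral along the set `S` where the gap `F h* - F h` is at most `q + F_r`. On `S` the inverse
continuity condition (the far region is excluded because `q + F_r < F_∞`) gives
`|h - h*| ≤ ((q + F_r) / c_p)^{1/p}`. Off `S` we have `F ≤ inf_B F - q`, while
`Z ≥ e^{α inf_B F} ρ(B)`, so the density there is at most `e^{-αq} / ρ(B)`.
-/

open MeasureTheory Real

/-- Exponential selection operator with pressure `α`. -/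
noncomputable def selectOp {d : ℕ} (α : ℝ) (F : EuclideanSpace ℝ (Fin d) → ℝ)
    (ρ : Measure (EuclideanSpace ℝ (Fin d))) : Measure (EuclideanSpace ℝ (Fin d)) :=
  ρ.withDensity (fun x => ENNReal.ofReal (exp (α * F x) / ∫ y, exp (α * F y) ∂ρ))

open Set Metric
open scoped ENNReal

namespace MeasureTheory

section Mean

variable {E : Type*} [NormedAddCommGroup E] [NormedSpace ℝ E] [CompleteSpace E]
  [MeasurableSpace E] {ν : Measure E} [IsProbabilityMeasure ν]

theorem norm_integral_id_sub_le (hid : Integrable (fun x => x) ν) (x₀ : E) :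
    ‖(∫ x, x ∂ν) - x₀‖ ≤ ∫ x, ‖x - x₀‖ ∂ν := by
  have hmean : (∫ x, x ∂ν) - x₀ = ∫ x, (x - x₀) ∂ν := by
    rw [integral_sub hid (integrable_const x₀), integral_const, probReal_univ, one_smul]
  rw [hmean]
  exact norm_integral_le_integral_norm _

end Mean

variable {X : Type*} {mX : MeasurableSpace X} {μ : Measure X}

theorem integral_le_add_setIntegral_compl [IsProbabilityMeasure μ] {g : X → ℝ} {s : Set X}
    {K : ℝ} (hs : MeasurableSet s) (hg : Integrable g μ) (hK : 0 ≤ K)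
    (hgK : ∀ x ∈ s, g x ≤ K) :
    ∫ x, g x ∂μ ≤ K + ∫ x in sᶜ, g x ∂μ := by
  have hle : ∫ x in s, g x ∂μ ≤ K :=
    calc ∫ x in s, g x ∂μ ≤ ∫ _ in s, K ∂μ :=
          setIntegral_mono_on hg.integrableOn (integrableOn_const (measure_ne_top _ _)) hs hgK
      _ = μ.real s * K := by rw [setIntegral_const, smul_eq_mul]
      _ ≤ K := mul_le_of_le_one_left hK measureReal_le_one
  rw [← integral_add_compl hs hg]
  linarith

variable {f : X → ℝ}

theorem integrable_exp_of_le [IsFiniteMeasure μ] (hf : Measurable f) {c : ℝ}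
    (hfc : ∀ x, f x ≤ c) : Integrable (fun x => exp (f x)) μ :=
  Integrable.of_bound (measurable_exp.comp hf).aestronglyMeasurable (exp c) <|
    ae_of_all _ fun x => by
      rw [norm_of_nonneg (exp_pos _).le]
      exact exp_le_exp.2 (hfc x)

theorem integrable_tilted_of_le [IsFiniteMeasure μ] (hf : Measurable f) {c : ℝ}
    (hfc : ∀ x, f x ≤ c) {E : Type*} [NormedAddCommGroup E] [NormedSpace ℝ E] {g : X → E}
    (hg : Integrable g μ) : Integrable g (μ.tilted f) := by
  rw [integrable_tilted_iff (integrable_exp_of_le hf hfc)]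
  exact hg.bdd_smul (exp c) (measurable_exp.comp hf).aestronglyMeasurable <|
    ae_of_all _ fun x => by
      rw [norm_of_nonneg (exp_pos _).le]
      exact exp_le_exp.2 (hfc x)

theorem setIntegral_tilted_le_of_density_le {g : X → ℝ} {s : Set X} {C : ℝ}
    (hs : MeasurableSet s) (hg : Integrable g μ) (hg0 : 0 ≤ g) (hC : 0 ≤ C)
    (hdens : ∀ x ∈ s, exp (f x) / ∫ y, exp (f y) ∂μ ≤ C) :
    ∫ x in s, g x ∂μ.tilted f ≤ C * ∫ x, g x ∂μ := by
  rw [setIntegral_tilted' f g hs]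
  calc ∫ x in s, (exp (f x) / ∫ y, exp (f y) ∂μ) • g x ∂μ ≤ ∫ x in s, C * g x ∂μ := by
        refine integral_mono_of_nonneg (ae_of_all _ fun x => ?_) (hg.const_mul C).integrableOn ?_
        · exact smul_nonneg (div_nonneg (exp_pos _).le (integral_nonneg fun _ => (exp_pos _).le))
            (hg0 x)
        · filter_upwards [ae_restrict_mem hs] with x hx
          exact mul_le_mul_of_nonneg_right (hdens x hx) (hg0 x)
    _ = C * ∫ x in s, g x ∂μ := integral_const_mul C _
    _ ≤ C * ∫ x, g x ∂μ :=
        mul_le_mul_of_nonneg_left (setIntegral_le_integral hg (ae_of_all _ hg0)) hC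

theorem exp_mul_measureReal_le_integral_exp {s : Set X} {b : ℝ} (hs : MeasurableSet s)
    (hμs : μ s ≠ ∞) (hint : Integrable (fun x => exp (f x)) μ) (hb : ∀ x ∈ s, b ≤ f x) :
    exp b * μ.real s ≤ ∫ x, exp (f x) ∂μ :=
  calc exp b * μ.real s ≤ ∫ x in s, exp (f x) ∂μ :=
        setIntegral_ge_of_const_le_real hs hμs (fun x hx => exp_le_exp.2 (hb x hx))
          hint.integrableOn
    _ ≤ ∫ x, exp (f x) ∂μ := setIntegral_le_integral hint (ae_of_all _ fun _ => (exp_pos _).le)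

theorem exp_div_integral_exp_le_of_le_sub {s : Set X} {b q : ℝ} {y : X} (hs : MeasurableSet s)
    (hμs : 0 < μ s) (hμs' : μ s ≠ ∞) (hint : Integrable (fun x => exp (f x)) μ)
    (hb : ∀ x ∈ s, b ≤ f x) (hy : f y ≤ b - q) :
    exp (f y) / ∫ x, exp (f x) ∂μ ≤ exp (-q) / μ.real s := by
  have hμs_real : 0 < μ.real s := ENNReal.toReal_pos hμs.ne' hμs'
  have hZ := exp_mul_measureReal_le_integral_exp hs hμs' hint hb
  calc exp (f y) / ∫ x, exp (f x) ∂μ ≤ exp (b - q) / (exp b * μ.real s) :=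
        div_le_div₀ (exp_pos _).le (exp_le_exp.2 hy) (by positivity) hZ
    _ = exp (-q) / μ.real s := by
        rw [sub_eq_add_neg, exp_add]
        field_simp

end MeasureTheory

theorem selectOp_eq_tilted {d : ℕ} (α : ℝ) (F : EuclideanSpace ℝ (Fin d) → ℝ)
    (ρ : Measure (EuclideanSpace ℝ (Fin d))) :
    selectOp α F ρ = ρ.tilted fun x => α * F x :=
  rfl

theorem norm_sub_le_rpow_of_gap_le {E : Type*} [SeminormedAddCommGroup E] {F : E → ℝ}
    {x₀ x : E} {cp p Rp Finfty ε : ℝ} (hcp : 0 < cp) (hp : 0 < p)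
    (hinv : ∀ h, ‖h‖ ≤ Rp → cp * ‖h - x₀‖ ^ p ≤ F x₀ - F h)
    (hfar : ∀ h, Rp < ‖h‖ → Finfty ≤ F x₀ - F h) (hε : ε < Finfty) (hx : F x₀ - F x ≤ ε) :
    ‖x - x₀‖ ≤ (ε / cp) ^ (1 / p) := by
  have hxR : ‖x‖ ≤ Rp := not_lt.1 fun hxR => (hfar x hxR).trans hx |>.not_gt hε
  have hpow : ‖x - x₀‖ ^ p ≤ ε / cp := (le_div_iff₀' hcp).2 ((hinv x hxR).trans hx)
  calc ‖x - x₀‖ = (‖x - x₀‖ ^ p) ^ (1 / p) := by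
        rw [← rpow_mul (norm_nonneg _), mul_one_div_cancel hp.ne', rpow_one]
    _ ≤ (ε / cp) ^ (1 / p) := rpow_le_rpow (by positivity) hpow (by positivity)

theorem quantitative_laplace_general {d : ℕ} (F : EuclideanSpace ℝ (Fin d) → ℝ)
    (hFc : Continuous F) (hstar : EuclideanSpace ℝ (Fin d))
    (hbdd : ∀ h, F h ≤ F hstar)
    (cp p Rp Finfty : ℝ) (hcp : 0 < cp) (hp : 0 < p)
    (hinv : ∀ h, ‖h‖ ≤ Rp → cp * ‖h - hstar‖ ^ p ≤ F hstar - F h)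
    (hfar : ∀ h, Rp < ‖h‖ → Finfty ≤ F hstar - F h)
    (ρ : Measure (EuclideanSpace ℝ (Fin d))) [IsProbabilityMeasure ρ]
    (hmom : Integrable (fun h => ‖h‖) ρ)
    (hsupp : ∀ s > 0, 0 < ρ (Metric.ball hstar s))
    (α : ℝ) (hα : 0 < α)
    (r q : ℝ) (hr : 0 < r) (hq : 0 < q)
    (hqF : q + (F hstar - sInf (F '' Metric.ball hstar r)) < Finfty) :
    ‖(∫ h, h ∂(selectOp α F ρ)) - hstar‖
      ≤ ((q + (F hstar - sInf (F '' Metric.ball hstar r))) / cp) ^ (1/p)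
        + (exp (-α * q) / (ρ (Metric.ball hstar r)).toReal) * ∫ h, ‖h - hstar‖ ∂ρ := by
  set b := sInf (F '' ball hstar r)
  have hb : ∀ x ∈ ball hstar r, b ≤ F x := by
    have hbdd_below : BddBelow (F '' ball hstar r) :=
      ((isCompact_closedBall hstar r).bddBelow_image hFc.continuousOn).mono
        (image_mono ball_subset_closedBall)
    exact fun x hx => csInf_le hbdd_below (mem_image_of_mem F hx)
  have hFr : 0 ≤ F hstar - b := sub_nonneg.2 (hb hstar (mem_ball_self hr))
  have hαF : ∀ x, α * F x ≤ α * F hstar := fun x => mul_le_mul_of_nonneg_left (hbdd x) hα.le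
  have hαFm : Measurable fun x => α * F x := measurable_const.mul hFc.measurable
  have := isProbabilityMeasure_tilted (μ := ρ) (integrable_exp_of_le hαFm hαF)
  have hid : Integrable (fun h => h) ρ := (integrable_norm_iff aestronglyMeasurable_id).1 hmom
  have hdist : Integrable (fun h => ‖h - hstar‖) ρ := (hid.sub (integrable_const hstar)).norm
  set S := {h | F hstar - F h ≤ q + (F hstar - b)}
  have hS : MeasurableSet S := measurableSet_le (by fun_prop) measurable_const
  have hoff_S : ∀ h ∉ S, α * F h ≤ α * b - α * q := fun h hh => by
    have hgap : q + (F hstar - b) < F hstar - F h := not_le.1 hh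
    have hFh : F h ≤ b - q := by linarith
    rw [← mul_sub]
    exact mul_le_mul_of_nonneg_left hFh hα.le
  rw [selectOp_eq_tilted]
  calc ‖(∫ h, h ∂ρ.tilted fun x => α * F x) - hstar‖
      ≤ ∫ h, ‖h - hstar‖ ∂ρ.tilted fun x => α * F x :=
        norm_integral_id_sub_le (integrable_tilted_of_le hαFm hαF hid) hstar
    _ ≤ ((q + (F hstar - b)) / cp) ^ (1/p)
          + ∫ h in Sᶜ, ‖h - hstar‖ ∂ρ.tilted fun x => α * F x :=
        integral_le_add_setIntegral_compl hS (integrable_tilted_of_le hαFm hαF hdist)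
          (rpow_nonneg (by positivity) _)
          fun h hh => norm_sub_le_rpow_of_gap_le hcp hp hinv hfar hqF hh
    _ ≤ _ := by
        refine add_le_add_right (setIntegral_tilted_le_of_density_le hS.compl hdist
          (fun _ => norm_nonneg _) (by positivity) fun h hh => ?_) _
        rw [neg_mul]
        exact exp_div_integral_exp_le_of_le_sub measurableSet_ball (hsupp r hr)
          (measure_ne_top _ _) (integrable_exp_of_le hαFm hαF)
          (fun x hx => mul_le_mul_of_nonneg_left (hb x hx) hα.le) (hoff_S h hh)

/-- Quantitative Laplace principle: for a fitness `F` with unique global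
maximizer `h*` satisfying an inverse continuity condition, the mean of the
exponentially reweighted measure satisfies
`|m(G_{αF}[ρ]) − h*| ≤ ((q + F_r)/c_p)^{1/p} + (e^{−αq}/ρ(B(h*,r))) ∫|h−h*| dρ`. -/
theorem quantitative_laplace {d : ℕ} (F : EuclideanSpace ℝ (Fin d) → ℝ)
    (hFc : Continuous F) (hstar : EuclideanSpace ℝ (Fin d))
    (hbdd : ∀ h, F h ≤ F hstar) (hmax : ∀ h, h ≠ hstar → F h < F hstar)
    (cp p Rp Finfty : ℝ) (hcp : 0 < cp) (hp : 0 < p) (hRp : 0 < Rp) (hFi : 0 < Finfty)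
    (hinv : ∀ h, ‖h‖ ≤ Rp → cp * ‖h - hstar‖ ^ p ≤ F hstar - F h)
    (hfar : ∀ h, Rp < ‖h‖ → Finfty ≤ F hstar - F h)
    (ρ : Measure (EuclideanSpace ℝ (Fin d))) [IsProbabilityMeasure ρ]
    (hmom : Integrable (fun h => ‖h‖) ρ)
    (hsupp : ∀ s > 0, 0 < ρ (Metric.ball hstar s))
    (α : ℝ) (hα : 0 < α)
    (r q : ℝ) (hr : 0 < r) (hrR : r ≤ Rp) (hq : 0 < q)
    (hqF : q + (F hstar - sInf (F '' Metric.ball hstar r)) < Finfty) :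
    ‖(∫ h, h ∂(selectOp α F ρ)) - hstar‖
      ≤ ((q + (F hstar - sInf (F '' Metric.ball hstar r))) / cp) ^ (1/p)
        + (exp (-α * q) / (ρ (Metric.ball hstar r)).toReal) * ∫ h, ‖h - hstar‖ ∂ρ :=
  quantitative_laplace_general F hFc hstar hbdd cp p Rp Finfty hcp hp hinv hfar ρ hmom hsupp α hα r
    q hr hq hqF
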